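/- Let x, y be unit vectors in R^n with r := ⟨x,y⟩ ∈ (0,1). For every unit vector w in the reversal cone (i.e., ⟨x,w⟩⟨y,w⟩ > r), we have ⟨w, x + y⟩² > 4r; equivalently, the squared correlation of w with v = x + y exceeds 2r/(1+r). -/

import Mathlib

open RealInnerProductSpace

/-! The AM–GM inequality `(a + b)² ≥ 4ab` applied to `a = ⟪x, w⟫`, `b = ⟪y, w⟫` gives
`⟪w, x + y⟫² ≥ 4 ⟪x, w⟫ ⟪y, w⟫ > 4r`; dividing by `‖x + y‖² = 2(1 + r)` gives the
correlation bound. -/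

section

variable {E : Type*} [NormedAddCommGroup E] [InnerProductSpace ℝ E]

theorem four_mul_inner_mul_inner_le_inner_add_sq (x y w : E) :
    4 * (⟪x, w⟫ * ⟪y, w⟫) ≤ ⟪w, x + y⟫ ^ 2 := by
  rw [inner_add_right, real_inner_comm x, real_inner_comm y]
  nlinarith [sq_nonneg (⟪x, w⟫ - ⟪y, w⟫)]

theorem norm_add_sq_eq_of_norm_eq_one {x y : E} (hx : ‖x‖ = 1) (hy : ‖y‖ = 1) :
    ‖x + y‖ ^ 2 = 2 * (1 + ⟪x, y⟫) := by
  rw [norm_add_sq_real, hx, hy]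
  ring

end

theorem stmt18_general (n : ℕ) (x y w : EuclideanSpace ℝ (Fin n))
    (hx : ‖x‖ = 1) (hy : ‖y‖ = 1)
    (hr0 : 0 < ⟪x, y⟫)
    (hcone : ⟪x, w⟫ * ⟪y, w⟫ > ⟪x, y⟫) :
    ⟪w, x + y⟫ ^ 2 > 4 * ⟪x, y⟫ ∧
    ⟪w, x + y⟫ ^ 2 / ‖x + y‖ ^ 2 > 2 * ⟪x, y⟫ / (1 + ⟪x, y⟫) := by
  have hsq : ⟪w, x + y⟫ ^ 2 > 4 * ⟪x, y⟫ :=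
    lt_of_lt_of_le (by linarith) (four_mul_inner_mul_inner_le_inner_add_sq x y w)
  refine ⟨hsq, ?_⟩
  rw [norm_add_sq_eq_of_norm_eq_one hx hy, gt_iff_lt,
    div_lt_div_iff₀ (by linarith) (by linarith)]
  nlinarith

/-- For unit vectors `x, y` with `r := ⟪x,y⟫ ∈ (0,1)` and any unit vector
`w` in the reversal cone (`⟪x,w⟫·⟪y,w⟫ > r`), we have `⟪w, x+y⟫² > 4r`; equivalently,
the squared correlation of `w` with `v = x + y` exceeds `2r/(1+r)`. -/
theorem stmt18 (n : ℕ) (x y w : EuclideanSpace ℝ (Fin n))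
    (hx : ‖x‖ = 1) (hy : ‖y‖ = 1) (hw : ‖w‖ = 1)
    (hr0 : 0 < ⟪x, y⟫) (hr1 : ⟪x, y⟫ < 1)
    (hcone : ⟪x, w⟫ * ⟪y, w⟫ > ⟪x, y⟫) :
    ⟪w, x + y⟫ ^ 2 > 4 * ⟪x, y⟫ ∧
    ⟪w, x + y⟫ ^ 2 / ‖x + y‖ ^ 2 > 2 * ⟪x, y⟫ / (1 + ⟪x, y⟫) :=
  stmt18_general n x y w hx hy hr0 hcone
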